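/- arXiv:math/0509262 — 4 statements merged into one kernel-verified Lean document; each statement's English description precedes it below -/
import Mathlib

section
/- The Loomis–Whitney inequality in ℝ^d: for nonnegative measurable functions f_1, ..., f_d on ℝ^{d-1}, one has ∫_{ℝ^d} ∏_{j=1}^d f_j(π_j(x)) dx ≤ ∏_{j=1}^d ‖f_j‖_{L^{d-1}(ℝ^{d-1})}, where π_j : ℝ^d → ℝ^{d-1} deletes the j-th coordinate. -/
/-!
Induction on the dimension; in dimension 2 both sides agree by Tonelli. Write a point of `α^(n+2)` as `(t, y)` with `t` its first coordinate.
The factor `f₀(π₀ x) = f₀(y)` does not depend on `t`, so the `t`-integral only sees the other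
`n + 1` factors, and Hölder's inequality with `n + 1` equal exponents bounds it by
`∏ₖ gₖ(πₖ y)^(1/(n+1))`, where `gₖ` integrates `f_{k+1}^(n+1)` along the `t`-line. Hölder's
inequality with exponents `n + 1` and `(n + 1)/n` in `y` then separates `f₀`, and the remaining
factor `∫ ∏ₖ gₖ(πₖ y)^(1/n) dy` is exactly the `n + 1`-dimensional inequality applied to the
functions `gₖ^(1/n)`. Tonelli gives `∫ gₖ = ∫ f_{k+1}^(n+1)`.
-/

open MeasureTheory ENNReal

theorem Fin.removeNth_succ_cons {α : Type*} {n : ℕ} (k : Fin (n + 1)) (t : α)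
    (y : Fin (n + 1) → α) :
    k.succ.removeNth (Fin.cons t y : Fin (n + 2) → α) = Fin.cons t (k.removeNth y) :=
  Fin.cons_comp_succ_succAbove t y k

section Holder

variable {β ι : Type*} [MeasurableSpace β] {ν : Measure β}

theorem lintegral_prod_le_prod_lintegral_rpow_card [Fintype ι] [Nonempty ι]
    {F : ι → β → ℝ≥0∞} (hF : ∀ i, AEMeasurable (F i) ν) :
    ∫⁻ b, ∏ i, F i b ∂ν ≤
      ∏ i, (∫⁻ b, F i b ^ (Fintype.card ι : ℝ) ∂ν) ^ (Fintype.card ι : ℝ)⁻¹ := by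
  have hm : (Fintype.card ι : ℝ) ≠ 0 := by positivity
  have := ENNReal.lintegral_prod_norm_pow_le (μ := ν) Finset.univ
    (fun i _ => (hF i).pow_const (Fintype.card ι : ℝ)) (p := fun _ => (Fintype.card ι : ℝ)⁻¹)
    (by simp [hm]) (fun _ _ => by positivity)
  simpa only [ENNReal.rpow_rpow_inv hm] using this

theorem lintegral_mul_rpow_inv_add_one_le {r : ℝ} (hr : 0 < r) {f H : β → ℝ≥0∞}
    (hf : AEMeasurable f ν) (hH : AEMeasurable H ν) :
    ∫⁻ b, f b * H b ^ (r + 1)⁻¹ ∂ν ≤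
      (∫⁻ b, f b ^ (r + 1) ∂ν) ^ (r + 1)⁻¹ * (∫⁻ b, H b ^ r⁻¹ ∂ν) ^ (r / (r + 1)) := by
  have hpq : (r + 1).HolderConjugate ((r + 1) / r) :=
    Real.holderConjugate_iff.2 ⟨by linarith, by field_simp; ring⟩
  have key := ENNReal.lintegral_mul_le_Lp_mul_Lq ν hpq hf (hH.pow_const (r + 1)⁻¹)
  have hexp : (r + 1)⁻¹ * ((r + 1) / r) = r⁻¹ := by field_simp
  simpa only [Pi.mul_apply, ← ENNReal.rpow_mul, hexp, one_div, inv_div] using key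

end Holder

section FinCons

variable {α : Type*} [MeasurableSpace α]

theorem measurable_fin_cons {n : ℕ} :
    Measurable fun p : α × (Fin n → α) => (Fin.cons p.1 p.2 : Fin (n + 1) → α) := by
  simpa [MeasurableEquiv.piFinSuccAbove_symm_apply, Fin.insertNthEquiv, Fin.insertNth_zero']
    using (MeasurableEquiv.piFinSuccAbove (fun _ : Fin (n + 1) => α) 0).symm.measurable

theorem measurable_removeNth {n : ℕ} (j : Fin (n + 1)) :
    Measurable (Fin.removeNth j : (Fin (n + 1) → α) → Fin n → α) :=
  measurable_pi_lambda _ fun _ => measurable_pi_apply _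

theorem lintegral_pi_eq_lintegral_lintegral_cons (μ : Measure α) [SigmaFinite μ] {n : ℕ}
    {F : (Fin (n + 1) → α) → ℝ≥0∞} (hF : Measurable F) :
    ∫⁻ x, F x ∂Measure.pi (fun _ => μ) =
      ∫⁻ y, ∫⁻ t, F (Fin.cons t y) ∂μ ∂Measure.pi (fun _ => μ) := by
  have e := (measurePreserving_piFinSuccAbove (fun _ : Fin (n + 1) => μ) 0).symm
  rw [← e.lintegral_comp hF]
  exact (lintegral_prod_symm' _ (hF.comp e.measurable)).trans (by
    simp [MeasurableEquiv.piFinSuccAbove_symm_apply, Fin.insertNthEquiv, Fin.insertNth_zero'])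

end FinCons

namespace LoomisWhitney

variable {α : Type*} [MeasurableSpace α]

/-- The Loomis–Whitney inequality on `α^(n+1)` with the product measure: `Fin.removeNth j` is the
projection `π_j`, and `n = d - 1`. -/
def LoomisWhitneyInequality (μ : Measure α) (n : ℕ) : Prop :=
  ∀ f : Fin (n + 1) → (Fin n → α) → ℝ≥0∞, (∀ j, Measurable (f j)) →
    ∫⁻ x, ∏ j, f j (j.removeNth x) ∂Measure.pi (fun _ => μ) ≤
      ∏ j, (∫⁻ y, f j y ^ (n : ℝ) ∂Measure.pi (fun _ => μ)) ^ (n : ℝ)⁻¹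

variable (μ : Measure α) [SigmaFinite μ]

theorem lintegral_prod_comp_removeNth_eq {n : ℕ} {f : Fin (n + 2) → (Fin (n + 1) → α) → ℝ≥0∞}
    (hf : ∀ j, Measurable (f j)) :
    ∫⁻ x, ∏ j, f j (j.removeNth x) ∂Measure.pi (fun _ => μ) =
      ∫⁻ y, f 0 y * ∫⁻ t, ∏ k : Fin (n + 1), f k.succ (Fin.cons t (k.removeNth y)) ∂μ
        ∂Measure.pi (fun _ => μ) := by
  have hF : Measurable fun x : Fin (n + 2) → α => ∏ j, f j (j.removeNth x) :=
    Finset.measurable_prod _ fun j _ => (hf j).comp (measurable_removeNth j)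
  rw [lintegral_pi_eq_lintegral_lintegral_cons μ hF]
  refine lintegral_congr fun y => ?_
  simp_rw [Fin.prod_univ_succ (n := n + 1), Fin.removeNth_zero, Fin.tail_cons,
    Fin.removeNth_succ_cons]
  exact lintegral_const_mul _ (Finset.measurable_prod _ fun k _ =>
    (hf k.succ).comp (measurable_fin_cons.comp (measurable_id.prodMk measurable_const)))

theorem loomisWhitneyInequality_one : LoomisWhitneyInequality μ 1 := by
  intro f hf
  have hcons : ∀ (t : α) (z : Fin 0 → α),
      (Fin.cons t z : Fin 1 → α) = (MeasurableEquiv.funUnique (Fin 1) α).symm t :=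
    fun t z => funext fun i => by fin_cases i; rfl
  have hline : ∀ z : Fin 0 → α,
      ∫⁻ t, f (Fin.succ 0) (Fin.cons t z) ∂μ = ∫⁻ y, f (Fin.succ 0) y ∂Measure.pi (fun _ => μ) :=
    fun z => by
      simp_rw [hcons]
      exact (measurePreserving_funUnique μ (Fin 1)).symm.lintegral_comp_emb
        (MeasurableEquiv.measurableEmbedding _) _
  rw [lintegral_prod_comp_removeNth_eq μ hf]
  simp only [Fin.prod_univ_succ, Fin.prod_univ_zero, mul_one, Nat.cast_one, ENNReal.rpow_one,
    inv_one]
  simp_rw [hline, lintegral_mul_const _ (hf 0)]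
  rfl

theorem LoomisWhitneyInequality.succ {n : ℕ} (hn : 1 ≤ n) (ih : LoomisWhitneyInequality μ n) :
    LoomisWhitneyInequality μ (n + 1) := by
  intro f hf
  have hn0 : (n : ℝ) ≠ 0 := Nat.cast_ne_zero.2 (by omega)
  set g : Fin (n + 1) → (Fin n → α) → ℝ≥0∞ :=
    fun k z => ∫⁻ t, f k.succ (Fin.cons t z) ^ ((n : ℝ) + 1) ∂μ
  have hg : ∀ k, Measurable (g k) := fun k =>
    (((hf k.succ).comp measurable_fin_cons).pow_const _).lintegral_prod_left'
  have hg_int : ∀ k, ∫⁻ z, g k z ∂Measure.pi (fun _ => μ) =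
      ∫⁻ y, f k.succ y ^ ((n : ℝ) + 1) ∂Measure.pi (fun _ => μ) := fun k =>
    (lintegral_pi_eq_lintegral_lintegral_cons μ ((hf k.succ).pow_const _)).symm
  have hline : ∀ y : Fin (n + 1) → α,
      ∫⁻ t, ∏ k : Fin (n + 1), f k.succ (Fin.cons t (k.removeNth y)) ∂μ ≤
        (∏ k, g k (k.removeNth y)) ^ ((n : ℝ) + 1)⁻¹ := fun y => by
    rw [← ENNReal.prod_rpow_of_nonneg (by positivity)]
    simpa using lintegral_prod_le_prod_lintegral_rpow_card fun k : Fin (n + 1) =>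
      ((hf k.succ).comp
        (measurable_fin_cons.comp (measurable_id.prodMk measurable_const))).aemeasurable
  have hH : Measurable fun y : Fin (n + 1) → α => ∏ k, g k (k.removeNth y) :=
    Finset.measurable_prod _ fun k _ => (hg k).comp (measurable_removeNth k)
  have hIH := ih (fun k z => g k z ^ (n : ℝ)⁻¹) (fun k => (hg k).pow_const _)
  simp only [ENNReal.rpow_inv_rpow hn0] at hIH
  push_cast
  calc ∫⁻ x, ∏ j, f j (j.removeNth x) ∂Measure.pi (fun _ => μ)
      = ∫⁻ y, f 0 y * ∫⁻ t, ∏ k : Fin (n + 1), f k.succ (Fin.cons t (k.removeNth y)) ∂μ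
          ∂Measure.pi (fun _ => μ) := lintegral_prod_comp_removeNth_eq μ hf
    _ ≤ ∫⁻ y, f 0 y * (∏ k, g k (k.removeNth y)) ^ ((n : ℝ) + 1)⁻¹ ∂Measure.pi (fun _ => μ) :=
        lintegral_mono fun y => by gcongr; exact hline y
    _ ≤ (∫⁻ y, f 0 y ^ ((n : ℝ) + 1) ∂Measure.pi (fun _ => μ)) ^ ((n : ℝ) + 1)⁻¹ *
          (∫⁻ y, (∏ k, g k (k.removeNth y)) ^ (n : ℝ)⁻¹ ∂Measure.pi (fun _ => μ)) ^
            ((n : ℝ) / (n + 1)) :=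
        lintegral_mul_rpow_inv_add_one_le (by positivity) (hf 0).aemeasurable hH.aemeasurable
    _ ≤ (∫⁻ y, f 0 y ^ ((n : ℝ) + 1) ∂Measure.pi (fun _ => μ)) ^ ((n : ℝ) + 1)⁻¹ *
          (∏ k, (∫⁻ z, g k z ∂Measure.pi (fun _ => μ)) ^ (n : ℝ)⁻¹) ^ ((n : ℝ) / (n + 1)) := by
        gcongr
        simpa only [ENNReal.prod_rpow_of_nonneg (inv_nonneg.2 n.cast_nonneg)] using hIH
    _ = ∏ j, (∫⁻ y, f j y ^ ((n : ℝ) + 1) ∂Measure.pi (fun _ => μ)) ^ ((n : ℝ) + 1)⁻¹ := by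
        rw [Fin.prod_univ_succ (n := n + 1), ← ENNReal.prod_rpow_of_nonneg (by positivity)]
        congr 1
        refine Finset.prod_congr rfl fun k _ => ?_
        rw [hg_int, ← ENNReal.rpow_mul]
        congr 1
        field_simp

theorem loomisWhitneyInequality_of_one_le {n : ℕ} (hn : 1 ≤ n) : LoomisWhitneyInequality μ n := by
  induction n, hn using Nat.le_induction with
  | base => exact loomisWhitneyInequality_one μ
  | succ n hn ih => exact ih.succ μ hn

end LoomisWhitney

theorem stmt2 (n : ℕ) (hn : 1 ≤ n)
    (f : Fin (n + 1) → (Fin n → ℝ) → ℝ≥0∞) (hf : ∀ j, Measurable (f j)) :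
    ∫⁻ x : Fin (n + 1) → ℝ, ∏ j, f j (fun i => x (j.succAbove i)) ≤
      ∏ j, (∫⁻ y : Fin n → ℝ, f j y ^ (n : ℝ)) ^ ((n : ℝ)⁻¹) :=
  LoomisWhitney.loomisWhitneyInequality_of_one_le volume hn f hf
end

section
/- If P_1, ..., P_d are orthogonal projections on ℝ^d of rank d−1 with (1/(d−1))∑_{j=1}^d P_j = I, and x_1 is a unit vector in ker P_1, then P_j x_1 = x_1 for all j ≠ 1. -/
open Matrix

theorem stmt10 (d : ℕ) (P : Fin d → Matrix (Fin d) (Fin d) ℝ)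
    (hsymm : ∀ j, (P j).IsSymm) (hidem : ∀ j, P j * P j = P j)
    (hrank : ∀ j, (P j).rank = d - 1)
    (hsum : ((d : ℝ) - 1)⁻¹ • ∑ j, P j = 1)
    (j₀ : Fin d) (x₁ : Fin d → ℝ) (hunit : x₁ ⬝ᵥ x₁ = 1)
    (hker : (P j₀).mulVec x₁ = 0) :
    ∀ j, j ≠ j₀ → (P j).mulVec x₁ = x₁ := by
  intro j hj
  have hd : 2 ≤ d := by
    by_contra h
    push_neg at h
    interval_cases d
    · exact j.elim0
    · exact hj (Subsingleton.elim j j₀)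
  have hd1 : ((d:ℝ) - 1) ≠ 0 := by
    have : (2:ℝ) ≤ (d:ℝ) := by exact_mod_cast hd
    linarith
  have hsum' : ∑ i, P i = ((d:ℝ)-1) • (1 : Matrix (Fin d) (Fin d) ℝ) := by
    rw [← hsum, smul_smul, mul_inv_cancel₀ hd1, one_smul]
  set f : Fin d → ℝ := fun i => x₁ ⬝ᵥ (P i).mulVec x₁ with hf
  have hfP : ∀ i, f i = (P i).mulVec x₁ ⬝ᵥ (P i).mulVec x₁ := by
    intro i
    have h2 : (P i).mulVec x₁ = (P i).mulVec ((P i).mulVec x₁) := by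
      rw [mulVec_mulVec, hidem]
    calc f i = x₁ ⬝ᵥ (P i).mulVec ((P i).mulVec x₁) := by rw [hf]; exact congrArg _ h2
      _ = (x₁ ᵥ* P i) ⬝ᵥ (P i).mulVec x₁ := by rw [dotProduct_mulVec]
      _ = (P i).mulVec x₁ ⬝ᵥ (P i).mulVec x₁ := by
            have hv : x₁ ᵥ* P i = P i *ᵥ x₁ := by
              conv_lhs => rw [← (hsymm i).eq]
              exact vecMul_transpose _ _
            rw [hv]
  have hfnn : ∀ i, 1 - f i = (x₁ - (P i).mulVec x₁) ⬝ᵥ (x₁ - (P i).mulVec x₁) := by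
    intro i
    have hc : (P i).mulVec x₁ ⬝ᵥ x₁ = f i := by rw [dotProduct_comm]
    simp only [sub_dotProduct, dotProduct_sub]
    rw [hunit, hc, ← hfP i]
    ring
  have hmv : (∑ i, P i) *ᵥ x₁ = ∑ i, P i *ᵥ x₁ :=
    map_sum (Matrix.mulVec.addMonoidHomLeft x₁) P Finset.univ
  have hdp : x₁ ⬝ᵥ (∑ i, P i *ᵥ x₁) = ∑ i, x₁ ⬝ᵥ (P i *ᵥ x₁) := by
    simp [dotProduct, Finset.mul_sum, Finset.sum_apply]
    rw [Finset.sum_comm]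
  have hsumf : ∑ i, f i = (d:ℝ) - 1 := by
    simp only [hf]
    rw [← hdp, ← hmv, hsum']
    simp [smul_mulVec, hunit]
  have hj0 : f j₀ = 0 := by simp [hf, hker]
  have hzero : ∑ i ∈ Finset.univ.erase j₀, (1 - f i) = 0 := by
    rw [Finset.sum_sub_distrib, Finset.sum_const]
    rw [Finset.sum_erase _ (by simpa using hj0), hsumf]
    simp [Finset.card_erase_of_mem]
    have h1 : 1 ≤ d := by omega
    push_cast [Nat.cast_sub h1]
    ring
  have hall : ∀ i ∈ Finset.univ.erase j₀, 1 - f i = 0 := by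
    refine (Finset.sum_eq_zero_iff_of_nonneg ?_).mp hzero
    intro i _
    rw [hfnn i]
    exact Finset.sum_nonneg fun k _ => mul_self_nonneg _
  have hjj : 1 - f j = 0 := hall j (Finset.mem_erase.mpr ⟨hj, Finset.mem_univ j⟩)
  rw [hfnn j] at hjj
  exact (sub_eq_zero.mp (dotProduct_self_eq_zero.mp hjj)).symm
end

section
/- Polynomial extrapolation lemma (one-variable version): let w : ℝ^d → ℝ be measurable with ∫|w| < ∞ and let f : ℝ^d → [0,1] be measurable such that ∫_{ℝ^d} w(x) f(x)^p dx = 0 for all positive integers p. Then ∫_{ℝ^d} w(x) f(x)^p dx = 0 for all real p > 0, provided that the function p ↦ ∫ w(x) f(x)^p dx is analytic on (0,∞) (which holds under the stated integrability assumptions when additionally ∫ |w(x)| f(x)^ε dx < ∞ for some ε > 0). -/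
/-!
Since `0 ≤ f ≤ 1`, the moment hypotheses and linearity give `∫ w · Q(f) = 0` for every
polynomial `Q` with `Q(0) = 0`. By Weierstrass, `t ↦ t ^ p` is a uniform limit of such
polynomials on `[0, 1]` (it vanishes at `0` for `p > 0`), and `w` is integrable, so
`∫ w · f ^ p` is a limit of zeros.
-/

open MeasureTheory Polynomial Set

lemma Polynomial.exists_eval_zero_eq_zero_near_of_continuousOn {g : ℝ → ℝ}
    (hg : ContinuousOn g (Icc 0 1)) (hg0 : g 0 = 0) {ε : ℝ} (hε : 0 < ε) :
    ∃ Q : ℝ[X], Q.eval 0 = 0 ∧ ∀ t ∈ Icc (0 : ℝ) 1, |Q.eval t - g t| ≤ ε := by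
  obtain ⟨P, hP⟩ := exists_polynomial_near_of_continuousOn 0 1 g hg (ε / 2) (half_pos hε)
  refine ⟨P - C (P.eval 0), by simp, fun t ht => ?_⟩
  have hP0 : |P.eval 0 - g 0| < ε / 2 := hP 0 ⟨le_rfl, zero_le_one⟩
  rw [hg0, sub_zero] at hP0
  calc |(P - C (P.eval 0)).eval t - g t| = |(P.eval t - g t) - P.eval 0| := by
        simp only [eval_sub, eval_C]; ring_nf
    _ ≤ |P.eval t - g t| + |P.eval 0| := abs_sub _ _
    _ ≤ ε := by linarith [hP t ht]

section Moments

variable {α : Type*} [MeasurableSpace α] {μ : Measure α} {w f : α → ℝ}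

lemma MeasureTheory.Integrable.mul_comp_of_mem_Icc (hw : Integrable w μ) (hf : AEStronglyMeasurable f μ)
    (hf01 : ∀ x, f x ∈ Icc 0 1) {g : ℝ → ℝ} (hg : Continuous g) :
    Integrable (fun x => w x * g (f x)) μ := by
  obtain ⟨c, hc⟩ := isCompact_Icc.exists_bound_of_continuousOn hg.continuousOn
  exact hw.mul_bdd (hg.comp_aestronglyMeasurable hf) (.of_forall fun x => hc _ (hf01 x))

lemma integral_mul_eval_comp (hw : Integrable w μ) (hf : AEStronglyMeasurable f μ)
    (hf01 : ∀ x, f x ∈ Icc 0 1) (Q : ℝ[X]) :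
    ∫ x, w x * Q.eval (f x) ∂μ =
      ∑ n ∈ Finset.range (Q.natDegree + 1), Q.coeff n * ∫ x, w x * f x ^ n ∂μ := by
  simp_rw [eval_eq_sum_range, Finset.mul_sum, ← integral_const_mul]
  rw [← integral_finsetSum _ fun n _ =>
    (hw.mul_comp_of_mem_Icc hf hf01 (continuous_pow n)).const_mul _]
  congr 1 with x
  exact Finset.sum_congr rfl fun n _ => by ring

lemma integral_mul_eval_comp_eq_zero (hw : Integrable w μ) (hf : AEStronglyMeasurable f μ)
    (hf01 : ∀ x, f x ∈ Icc 0 1) (hmom : ∀ n : ℕ, 0 < n → ∫ x, w x * f x ^ n ∂μ = 0)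
    {Q : ℝ[X]} (hQ : Q.eval 0 = 0) : ∫ x, w x * Q.eval (f x) ∂μ = 0 := by
  rw [integral_mul_eval_comp hw hf hf01]
  refine Finset.sum_eq_zero fun n _ => ?_
  rcases Nat.eq_zero_or_pos n with rfl | hn
  · rw [coeff_zero_eq_eval_zero, hQ, zero_mul]
  · rw [hmom n hn, mul_zero]

lemma integral_mul_comp_eq_zero_of_forall_polynomial (hw : Integrable w μ)
    (hf : AEStronglyMeasurable f μ) (hf01 : ∀ x, f x ∈ Icc 0 1)
    (hpoly : ∀ Q : ℝ[X], Q.eval 0 = 0 → ∫ x, w x * Q.eval (f x) ∂μ = 0)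
    {g : ℝ → ℝ} (hg : Continuous g) (hg0 : g 0 = 0) :
    ∫ x, w x * g (f x) ∂μ = 0 := by
  set K := ∫ x, |w x| ∂μ
  have hK : 0 ≤ K := integral_nonneg fun x => abs_nonneg _
  suffices h : ∀ ε > 0, |∫ x, w x * g (f x) ∂μ| ≤ 0 + ε from
    abs_nonpos_iff.mp (le_of_forall_pos_le_add h)
  intro ε hε
  have hδ : 0 < ε / (K + 1) := by positivity
  obtain ⟨Q, hQ0, hQ⟩ :=
    exists_eval_zero_eq_zero_near_of_continuousOn hg.continuousOn hg0 hδ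
  have hwQ := hw.mul_comp_of_mem_Icc hf hf01 Q.continuous
  have hwg := hw.mul_comp_of_mem_Icc hf hf01 hg
  calc |∫ x, w x * g (f x) ∂μ| = ‖∫ x, w x * (Q.eval (f x) - g (f x)) ∂μ‖ := by
        simp_rw [mul_sub]
        rw [integral_sub hwQ hwg, hpoly Q hQ0, zero_sub, Real.norm_eq_abs, abs_neg]
    _ ≤ ∫ x, |w x| * (ε / (K + 1)) ∂μ := by
        refine norm_integral_le_of_norm_le (hw.abs.mul_const _) (.of_forall fun x => ?_)
        rw [norm_mul, Real.norm_eq_abs, Real.norm_eq_abs]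
        exact mul_le_mul_of_nonneg_left (hQ _ (hf01 x)) (abs_nonneg _)
    _ = K / (K + 1) * ε := by rw [integral_mul_const]; ring
    _ ≤ 0 + ε := by
        rw [zero_add]
        exact mul_le_of_le_one_left hε.le ((div_le_one (by positivity)).mpr (by linarith))

end Moments

theorem stmt12_general (d : ℕ) (w : (Fin d → ℝ) → ℝ) (f : (Fin d → ℝ) → ℝ)
    (hw : Integrable w) (hfm : Measurable f)
    (hf0 : ∀ x, 0 ≤ f x) (hf1 : ∀ x, f x ≤ 1)
    (hint : ∀ p : ℕ, 0 < p → ∫ x, w x * f x ^ (p : ℝ) = 0) :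
    ∀ p : ℝ, 0 < p → ∫ x, w x * f x ^ p = 0 := by
  intro p hp
  have hf01 : ∀ x, f x ∈ Icc 0 1 := fun x => ⟨hf0 x, hf1 x⟩
  have hmom : ∀ n : ℕ, 0 < n → ∫ x, w x * f x ^ n = 0 := fun n hn => by
    simpa only [Real.rpow_natCast] using hint n hn
  exact integral_mul_comp_eq_zero_of_forall_polynomial hw hfm.aestronglyMeasurable hf01
    (fun Q hQ => integral_mul_eval_comp_eq_zero hw hfm.aestronglyMeasurable hf01 hmom hQ)
    (Real.continuous_rpow_const hp.le) (Real.zero_rpow hp.ne')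

theorem stmt12 (d : ℕ) (w : (Fin d → ℝ) → ℝ) (f : (Fin d → ℝ) → ℝ)
    (hw : Integrable w) (hfm : Measurable f)
    (hf0 : ∀ x, 0 ≤ f x) (hf1 : ∀ x, f x ≤ 1)
    (hint : ∀ p : ℕ, 0 < p → ∫ x, w x * f x ^ (p : ℝ) = 0)
    (hanalytic : AnalyticOn ℝ (fun p : ℝ => ∫ x, w x * f x ^ p) (Set.Ioi 0)) :
    ∀ p : ℝ, 0 < p → ∫ x, w x * f x ^ p = 0 :=
  stmt12_general d w f hw hfm hf0 hf1 hint
end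

section
/- If l, l', l'' are three concurrent lines in ℝ³ whose unit direction vectors span a parallelepiped of volume at least θ, and among the three pairwise angles the largest is α (attained, say, by l and l'), then θ^{1/2} ≲ α ≲ 1 and the angle β between l'' and the plane spanned by l and l' satisfies θ/α ≲ β ≲ α (up to absolute constants). -/
/-!
Write `α` for the angle between `l` and `l'`, `n` for a unit normal of their plane and
`β = arcsin |u'' ⬝ n|` for the angle between `l''` and that plane. Since `u ⨯₃ u'` is a multiple of
`n` of length `sin α`, the volume is `sin α * sin β ≤ α β`. Bessel's inequality for the orthonormal
pair `u, n` gives `β ≤ ∠(l, l'') ≤ α`. Hence `θ ≤ α β ≤ α²`, `θ / α ≤ β ≤ α`, and `α ≤ π`.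
-/

open Matrix Real

theorem sq_dotProduct_add_sq_dotProduct_le {ι : Type*} [Fintype ι] {u n : ι → ℝ}
    (hu : u ⬝ᵥ u = 1) (hn : n ⬝ᵥ n = 1) (hun : u ⬝ᵥ n = 0) (w : ι → ℝ) :
    (u ⬝ᵥ w) ^ 2 + (n ⬝ᵥ w) ^ 2 ≤ w ⬝ᵥ w := by
  have h : 0 ≤ (w - (u ⬝ᵥ w) • u - (n ⬝ᵥ w) • n) ⬝ᵥ (w - (u ⬝ᵥ w) • u - (n ⬝ᵥ w) • n) := by
    simpa using dotProduct_star_self_nonneg (w - (u ⬝ᵥ w) • u - (n ⬝ᵥ w) • n)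
  simp only [sub_dotProduct, dotProduct_sub, smul_dotProduct, dotProduct_smul, smul_eq_mul,
    dotProduct_comm w u, dotProduct_comm w n, dotProduct_comm n u, hu, hn, hun] at h
  nlinarith [h]

theorem Real.arcsin_abs_le_arccos_abs {a b : ℝ} (h : a ^ 2 + b ^ 2 ≤ 1) :
    arcsin |b| ≤ arccos |a| := by
  rw [arccos_eq_arcsin (abs_nonneg a), sq_abs]
  exact arcsin_le_arcsin (abs_le_sqrt (by linarith))

theorem cross_eq_dotProduct_smul_of_orthogonal {u v n : Fin 3 → ℝ} (hn : n ⬝ᵥ n = 1)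
    (hnu : n ⬝ᵥ u = 0) (hnv : n ⬝ᵥ v = 0) : u ⨯₃ v = (n ⬝ᵥ u ⨯₃ v) • n := by
  have hperp : n ⨯₃ (u ⨯₃ v) = 0 := by
    rw [cross_cross_eq_smul_sub_smul', hnv, dotProduct_comm, hnu, zero_smul, zero_smul, sub_zero]
  have h := cross_cross_eq_smul_sub_smul' n n (u ⨯₃ v)
  rw [hperp, map_zero, hn, one_smul, eq_comm, sub_eq_zero] at h
  exact h.symm

theorem abs_det_eq_sqrt_mul_abs_dotProduct {u v w n : Fin 3 → ℝ} (hu : u ⬝ᵥ u = 1)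
    (hv : v ⬝ᵥ v = 1) (hn : n ⬝ᵥ n = 1) (hnu : n ⬝ᵥ u = 0) (hnv : n ⬝ᵥ v = 0) :
    |(Matrix.of ![u, v, w]).det| = √(1 - (u ⬝ᵥ v) ^ 2) * |w ⬝ᵥ n| := by
  have hcross := cross_eq_dotProduct_smul_of_orthogonal hn hnu hnv
  set k := n ⬝ᵥ u ⨯₃ v
  have hdet : (Matrix.of ![u, v, w]).det = k * (w ⬝ᵥ n) := by
    rw [show (Matrix.of ![u, v, w]).det = Matrix.det ![u, v, w] from rfl, ← triple_product_eq_det,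
      triple_product_permutation, triple_product_permutation, hcross, dotProduct_smul,
      smul_eq_mul]
  have hnorm : k ^ 2 = 1 - (u ⬝ᵥ v) ^ 2 := by
    have h := cross_dot_cross u v u v
    rw [hu, hv, dotProduct_comm v u] at h
    rw [hcross, smul_dotProduct, dotProduct_smul, hn, smul_eq_mul, smul_eq_mul] at h
    nlinarith [h]
  rw [hdet, abs_mul, ← hnorm, sqrt_sq_eq_abs]

theorem stmt16 : ∃ c C : ℝ, 0 < c ∧ 0 < C ∧
    ∀ (u u' u'' n : Fin 3 → ℝ) (θ : ℝ),
      u ⬝ᵥ u = 1 → u' ⬝ᵥ u' = 1 → u'' ⬝ᵥ u'' = 1 →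
      n ⬝ᵥ n = 1 → n ⬝ᵥ u = 0 → n ⬝ᵥ u' = 0 →
      0 < θ → θ ≤ |(Matrix.of ![u, u', u'']).det| →
      Real.arccos |u ⬝ᵥ u''| ≤ Real.arccos |u ⬝ᵥ u'| →
      Real.arccos |u' ⬝ᵥ u''| ≤ Real.arccos |u ⬝ᵥ u'| →
      (c * Real.sqrt θ ≤ Real.arccos |u ⬝ᵥ u'| ∧
       Real.arccos |u ⬝ᵥ u'| ≤ C ∧
       c * (θ / Real.arccos |u ⬝ᵥ u'|) ≤ Real.arcsin |u'' ⬝ᵥ n| ∧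
       Real.arcsin |u'' ⬝ᵥ n| ≤ C * Real.arccos |u ⬝ᵥ u'|) := by
  refine ⟨1, 4, one_pos, by norm_num, ?_⟩
  intro u u' u'' n θ hu hu' hu'' hn hnu hnu' _ hθ hαb _
  set α := arccos |u ⬝ᵥ u'|
  set β := arcsin |u'' ⬝ᵥ n|
  have hα : 0 ≤ α := arccos_nonneg _
  have hβ : 0 ≤ β := arcsin_nonneg.mpr (abs_nonneg _)
  have hbessel := sq_dotProduct_add_sq_dotProduct_le hu hn
    (by rwa [dotProduct_comm]) u''
  rw [hu'', dotProduct_comm n] at hbessel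
  have hβα : β ≤ α := (arcsin_abs_le_arccos_abs hbessel).trans hαb
  have hθαβ : θ ≤ α * β := calc
    θ ≤ √(1 - (u ⬝ᵥ u') ^ 2) * |u'' ⬝ᵥ n| := by
      rwa [← abs_det_eq_sqrt_mul_abs_dotProduct hu hu' hn hnu hnu']
    _ = sin α * sin β := by
      rw [sin_arccos, sq_abs, sin_arcsin (by linarith [abs_nonneg (u'' ⬝ᵥ n)])
        (abs_le_one_iff_mul_self_le_one.mpr (by nlinarith))]
    _ ≤ α * β := mul_le_mul (sin_le hα) (sin_le hβ) (sin_nonneg_of_nonneg_of_le_pi hβ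
      (by linarith [arcsin_le_pi_div_two |u'' ⬝ᵥ n|, pi_pos])) hα
  refine ⟨?_, ?_, ?_, ?_⟩
  · rw [one_mul, sqrt_le_left hα]
    nlinarith
  · linarith [arccos_le_pi |u ⬝ᵥ u'|, pi_le_four]
  · rw [one_mul]
    exact div_le_of_le_mul₀ hα hβ (by linarith)
  · linarith
end
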